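/- arXiv:math/0506383 — 6 statements merged into one kernel-verified Lean document; each statement's English description precedes it below -/
import Mathlib

section
/- If Φ is a positive generalized power series in κ[[e^G]], then for every g ∈ G there are only finitely many integers i ≥ 0 such that the coefficient of e^g in Φⁱ is nonzero; hence for any sequence of scalars (cᵢ), the sum c₀ + c₁Φ + c₂Φ² + ⋯ defines a generalized power series. -/
open HahnSeries

/-- If `Φ` is a positive generalized power series, then for every `g` only finitely many
powers `Φⁱ` have nonzero coefficient at `e^g`; hence for any scalars `cᵢ` the sum
`c₀ + c₁Φ + c₂Φ² + ⋯` defines a generalized power series. -/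
theorem sum_powers_of_positive {κ : Type*} [Field κ]
    {G : Type*} [AddCommGroup G] [LinearOrder G] [IsOrderedAddMonoid G]
    (Φ : HahnSeries G κ) (hΦ : ∀ h : G, h ≤ 0 → Φ.coeff h = 0) :
    (∀ g : G, {i : ℕ | (Φ ^ i).coeff g ≠ 0}.Finite) ∧
    ∀ c : ℕ → κ, ∃ S : HahnSeries G κ,
      ∀ g : G, S.coeff g = ∑ᶠ i : ℕ, c i * (Φ ^ i).coeff g := by
  have hx : 0 < Φ.orderTop := by
    by_cases h0 : Φ = 0
    · simp [h0]
    · rw [HahnSeries.zero_lt_orderTop_iff h0]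
      by_contra hle
      push_neg at hle
      exact HahnSeries.coeff_order_eq_zero.not.mpr h0 (hΦ _ hle)
  let P := HahnSeries.SummableFamily.powers Φ
  refine ⟨fun g => (P.finite_co_support g).subset (fun i hi => by simpa [P, HahnSeries.SummableFamily.powers_of_orderTop_pos hx] using hi), fun c => ?_⟩
  let F : HahnSeries.SummableFamily G κ ℕ :=
    { toFun := fun i => c i • Φ ^ i
      isPWO_iUnion_support' := P.isPWO_iUnion_support.mono (by
        refine Set.iUnion_mono fun i => ?_
        intro g hg
        simp only [HahnSeries.mem_support, HahnSeries.coeff_smul, smul_eq_mul] at hg ⊢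
        exact fun h => hg (by simp_all [P, HahnSeries.SummableFamily.powers_of_orderTop_pos hx]))
      finite_co_support' := fun g => (P.finite_co_support g).subset (by
        intro i hi
        simp only [Set.mem_setOf_eq, HahnSeries.coeff_smul, smul_eq_mul] at hi ⊢
        exact fun h => hi (by simp_all [P, HahnSeries.SummableFamily.powers_of_orderTop_pos hx])) }
  refine ⟨F.hsum, fun g => ?_⟩
  rw [HahnSeries.SummableFamily.coeff_hsum]
  exact finsum_congr fun i => by show (c i • Φ ^ i).coeff g = _; simp
end

section
/- Suppose G is generated freely by its subgroup H and elements u₁,…,uₙ. The partial derivation ∂/∂Xᵢ on κ[[e^G]] with respect to the variable Xᵢ = e^{uᵢ}, defined on a series Σ φ_{j₁…jₙ} X₁^{j₁}⋯Xₙ^{jₙ} (with φ_{j₁…jₙ} ∈ κ[[e^H]]) by multiplying each term by jᵢ and decreasing the exponent of Xᵢ by one, is a well-defined κ[[e^H]]-derivation on κ[[e^G]]. -/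
/-- Data exhibiting a totally ordered abelian group `G` as generated freely by a
subgroup `H` and `n` elements `u 0, …, u (n-1)`: every `g ∈ G` is uniquely
`h + Σᵢ sᵢ • uᵢ` with `h ∈ H`; `coord g` records the unique exponents `sᵢ`. -/
structure FreeData (G : Type*) [AddCommGroup G] [LinearOrder G] [IsOrderedAddMonoid G] (n : ℕ) where
  H : AddSubgroup G
  u : Fin n → G
  coord : G → Fin n → ℤ
  sub_mem : ∀ g : G, g - ∑ i, coord g i • u i ∈ H
  coord_unique : ∀ g : G, ∀ s : Fin n → ℤ, g - ∑ i, s i • u i ∈ H → s = coord g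

variable {κ : Type*} [Field κ] {G : Type*} [AddCommGroup G] [LinearOrder G] [IsOrderedAddMonoid G] {n : ℕ}

/-- The partial derivation `∂/∂Xᵢ` with respect to the variable `Xᵢ = e^{uᵢ}`,
defined termwise: it multiplies the term `φ e^h X₁^{j₁} ⋯ Xₙ^{jₙ}` by `jᵢ` and
decreases the exponent of `Xᵢ` by one. -/
noncomputable def FreeData.pderiv (F : FreeData G n) (i : Fin n) (Φ : HahnSeries G κ) :
    HahnSeries G κ where
  coeff g := (F.coord (g + F.u i) i : κ) * Φ.coeff (g + F.u i)
  isPWO_support' := by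
    have hsub : Function.support
        (fun g => (F.coord (g + F.u i) i : κ) * Φ.coeff (g + F.u i)) ⊆
        (fun x => x - F.u i) '' Φ.support := by
      intro g hg
      refine ⟨g + F.u i, ?_, add_sub_cancel_right g (F.u i)⟩
      intro h
      simp [h] at hg
    exact (Φ.isPWO_support.image_of_monotone
      (fun a b hab => sub_le_sub_right hab _)).mono hsub

/-- The variable `Xᵢ = e^{uᵢ}` associated to free generating data. -/
noncomputable def FreeData.X (F : FreeData G n) (κ : Type*) [Field κ] (i : Fin n) :
    HahnSeries G κ :=
  HahnSeries.single (F.u i) 1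


namespace FreeData
variable (F : FreeData G n)

lemma coord_add (g g' : G) : F.coord (g + g') = F.coord g + F.coord g' := by
  refine (F.coord_unique _ _ ?_).symm
  have := F.H.add_mem (F.sub_mem g) (F.sub_mem g')
  have hs : ∑ i, (F.coord g i + F.coord g' i) • F.u i
      = ∑ i, F.coord g i • F.u i + ∑ i, F.coord g' i • F.u i := by
    rw [← Finset.sum_add_distrib]; simp [add_smul]
  simp only [Pi.add_apply]
  rw [hs]
  convert this using 1
  abel

lemma coord_of_mem {h : G} (hh : h ∈ F.H) : F.coord h = 0 := by
  refine (F.coord_unique h 0 ?_).symm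
  simpa using hh

/-- Multiplying each coefficient by the `i`-th exponent. -/
noncomputable def cmul (i : Fin n) (Φ : HahnSeries G κ) : HahnSeries G κ where
  coeff g := (F.coord g i : κ) * Φ.coeff g
  isPWO_support' := Φ.isPWO_support.mono (fun g hg => by
    intro h
    simp [Function.mem_support, h] at hg)

lemma cmul_coeff (i : Fin n) (Φ : HahnSeries G κ) (g : G) :
    (F.cmul i Φ).coeff g = (F.coord g i : κ) * Φ.coeff g := rfl

lemma cmul_support (i : Fin n) (Φ : HahnSeries G κ) :
    (F.cmul i Φ).support ⊆ Φ.support := fun g hg => by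
  intro h
  simp [HahnSeries.mem_support, cmul_coeff, h] at hg

lemma pderiv_coeff (i : Fin n) (Φ : HahnSeries G κ) (g : G) :
    (F.pderiv i Φ).coeff g = (F.coord (g + F.u i) i : κ) * Φ.coeff (g + F.u i) := rfl

lemma pderiv_eq (i : Fin n) (Φ : HahnSeries G κ) :
    F.pderiv i Φ = HahnSeries.single (-F.u i) 1 * F.cmul i Φ := by
  ext g
  have h1 : g = (g + F.u i) + (-F.u i) := by abel
  calc (F.pderiv i Φ).coeff g = (F.coord (g + F.u i) i : κ) * Φ.coeff (g + F.u i) := rfl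
    _ = 1 * (F.cmul i Φ).coeff (g + F.u i) := by rw [one_mul, cmul_coeff]
    _ = (HahnSeries.single (-F.u i) 1 * F.cmul i Φ).coeff ((g + F.u i) + (-F.u i)) :=
        (HahnSeries.coeff_single_mul_add).symm
    _ = _ := by rw [← h1]

lemma cmul_mul (i : Fin n) (Φ Ψ : HahnSeries G κ) :
    F.cmul i (Φ * Ψ) = Φ * F.cmul i Ψ + Ψ * F.cmul i Φ := by
  ext g
  rw [HahnSeries.coeff_add,
    HahnSeries.coeff_mul_right' Ψ.isPWO_support (F.cmul_support i Ψ),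
    mul_comm Ψ (F.cmul i Φ),
    HahnSeries.coeff_mul_left' Φ.isPWO_support (F.cmul_support i Φ),
    F.cmul_coeff, HahnSeries.coeff_mul, Finset.mul_sum, ← Finset.sum_add_distrib]
  refine Finset.sum_congr rfl ?_
  rintro ⟨a, b⟩ hab
  rw [Finset.mem_addAntidiagonal] at hab
  have hc : F.coord g i = F.coord a i + F.coord b i := by
    rw [← hab.2.2, F.coord_add]; rfl
  rw [F.cmul_coeff, F.cmul_coeff, hc]
  push_cast
  ring

lemma prod_single (j : Fin n → G) :
    (∏ k, HahnSeries.single (j k) (1 : κ)) = HahnSeries.single (∑ k, j k) 1 := by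
  induction (Finset.univ : Finset (Fin n)) using Finset.cons_induction with
  | empty => simp [HahnSeries.single_zero_one]
  | cons a s ha ih =>
      rw [Finset.prod_cons, Finset.sum_cons, ih, HahnSeries.single_mul_single, one_mul]

lemma single_zpow (a : G) (m : ℤ) :
    (HahnSeries.single a (1 : κ)) ^ m = HahnSeries.single (m • a) 1 := by
  have hinv : ∀ b : G, (HahnSeries.single b (1 : κ))⁻¹ = HahnSeries.single (-b) 1 := by
    intro b
    refine inv_eq_of_mul_eq_one_right ?_
    rw [HahnSeries.single_mul_single, one_mul, add_neg_cancel, HahnSeries.single_zero_one]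
  obtain ⟨k, rfl | rfl⟩ := m.eq_nat_or_neg
  · rw [zpow_natCast, HahnSeries.single_pow, one_pow, natCast_zsmul]
  · rw [zpow_neg, zpow_natCast, HahnSeries.single_pow, one_pow, hinv, neg_smul, natCast_zsmul]

end FreeData

theorem test (F : FreeData G n) (i : Fin n) (Φ : HahnSeries G κ) : F.pderiv i Φ = F.pderiv i Φ := rfl

/-- The partial derivation `∂/∂Xᵢ` is a well-defined `κ[[e^H]]`-derivation on
`κ[[e^G]]`: it acts termwise on the expansion in the variables (multiplying a term
by `jᵢ` and decreasing the exponent of `Xᵢ` by one), is additive, satisfies the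
Leibniz rule, and kills series supported in `H`. -/
theorem pderiv_is_derivation (F : FreeData G n) (i : Fin n) :
    -- termwise action on `φ · X₁^{j₁} ⋯ Xₙ^{jₙ}` with `φ ∈ κ[[e^H]]`
    (∀ (φ : HahnSeries G κ), (∀ g : G, φ.coeff g ≠ 0 → g ∈ F.H) →
      ∀ j : Fin n → ℤ,
        F.pderiv i (φ * ∏ k, (F.X κ k) ^ (j k)) =
          j i • (φ * (∏ k, (F.X κ k) ^ (j k)) * (F.X κ i)⁻¹)) ∧
    -- additivity
    (∀ Φ Ψ : HahnSeries G κ, F.pderiv i (Φ + Ψ) = F.pderiv i Φ + F.pderiv i Ψ) ∧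
    -- Leibniz rule
    (∀ Φ Ψ : HahnSeries G κ,
      F.pderiv i (Φ * Ψ) = Φ * F.pderiv i Ψ + Ψ * F.pderiv i Φ) ∧
    -- vanishing on `κ[[e^H]]`
    (∀ φ : HahnSeries G κ, (∀ g : G, φ.coeff g ≠ 0 → g ∈ F.H) → F.pderiv i φ = 0) := by
  classical
  refine ⟨?_, ?_, ?_, ?_⟩
  · -- termwise action
    intro φ hφ j
    set c : G := ∑ k, j k • F.u k with hc
    have hprod : (∏ k, (F.X κ k) ^ (j k)) = HahnSeries.single c (1 : κ) := by
      rw [hc, ← FreeData.prod_single (κ := κ) (fun k => j k • F.u k)]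
      refine Finset.prod_congr rfl fun k _ => ?_
      rw [FreeData.X, FreeData.single_zpow]
    have hXinv : (F.X κ i)⁻¹ = HahnSeries.single (-F.u i) (1 : κ) := by
      refine inv_eq_of_mul_eq_one_right ?_
      rw [FreeData.X, HahnSeries.single_mul_single, one_mul, add_neg_cancel,
        HahnSeries.single_zero_one]
    have hcoordc : j = F.coord c := by
      refine F.coord_unique c j ?_
      simp only [hc, sub_self]
      exact F.H.zero_mem
    ext g
    have hR : (φ * ∏ k, (F.X κ k) ^ (j k)) * (F.X κ i)⁻¹
        = φ * HahnSeries.single (c + -F.u i) (1 : κ) := by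
      rw [hprod, hXinv, mul_assoc, HahnSeries.single_mul_single, one_mul]
    have hcoeffR : ((φ * ∏ k, (F.X κ k) ^ (j k)) * (F.X κ i)⁻¹).coeff g
        = φ.coeff (g + F.u i - c) := by
      rw [hR]
      have hg : g = (g + F.u i - c) + (c + -F.u i) := by abel
      calc (φ * HahnSeries.single (c + -F.u i) (1 : κ)).coeff g
          = (φ * HahnSeries.single (c + -F.u i) (1 : κ)).coeff
              ((g + F.u i - c) + (c + -F.u i)) := by rw [← hg]
        _ = φ.coeff (g + F.u i - c) * 1 := HahnSeries.coeff_mul_single_add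
        _ = _ := mul_one _
    have hcoeffL : (F.pderiv i (φ * ∏ k, (F.X κ k) ^ (j k))).coeff g
        = (F.coord (g + F.u i) i : κ) * φ.coeff (g + F.u i - c) := by
      rw [F.pderiv_coeff, hprod]
      congr 1
      have hg : g + F.u i = (g + F.u i - c) + c := by abel
      calc (φ * HahnSeries.single c (1 : κ)).coeff (g + F.u i)
          = (φ * HahnSeries.single c (1 : κ)).coeff ((g + F.u i - c) + c) := by rw [← hg]
        _ = φ.coeff (g + F.u i - c) * 1 := HahnSeries.coeff_mul_single_add
        _ = _ := mul_one _
    have hsmul : (j i • ((φ * ∏ k, (F.X κ k) ^ (j k)) * (F.X κ i)⁻¹)).coeff g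
        = j i • (((φ * ∏ k, (F.X κ k) ^ (j k)) * (F.X κ i)⁻¹).coeff g) :=
      map_zsmul (HahnSeries.coeff.addMonoidHom g) _ _
    rw [hcoeffL, hsmul, hcoeffR, zsmul_eq_mul]
    by_cases hz : φ.coeff (g + F.u i - c) = 0
    · rw [hz, mul_zero, mul_zero]
    · have hmem : g + F.u i - c ∈ F.H := hφ _ hz
      have h2 := F.coord_add (g + F.u i - c) c
      rw [sub_add_cancel] at h2
      have h3 : F.coord (g + F.u i) i = j i := by
        rw [h2, Pi.add_apply, F.coord_of_mem hmem, ← hcoordc]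
        simp
      rw [h3]
  · -- additivity
    intro Φ Ψ
    ext g
    simp only [F.pderiv_coeff, HahnSeries.coeff_add, mul_add]
  · -- Leibniz
    intro Φ Ψ
    rw [F.pderiv_eq, F.cmul_mul, mul_add, F.pderiv_eq i Ψ, F.pderiv_eq i Φ]
    ring
  · -- vanishing
    intro φ hφ
    ext g
    rw [F.pderiv_coeff, HahnSeries.coeff_zero]
    by_cases hz : φ.coeff (g + F.u i) = 0
    · rw [hz, mul_zero]
    · have := F.coord_of_mem (hφ _ hz)
      rw [this]
      simp
end

section
/- Let X₁,…,Xₙ and Y₁,…,Yₙ be two sets of variables of κ[[e^G]] over κ[[e^H]], related by Yᵢ = e^{hᵢ} X₁^{s_{i1}}⋯Xₙ^{s_{in}} with hᵢ ∈ H. Then the integer matrix (s_{ij}) is invertible over ℤ, and for every Φ ∈ κ[[e^G]] and every j, ∂Φ/∂Xⱼ = Σᵢ (∂Φ/∂Yᵢ)(∂Yᵢ/∂Xⱼ). That is, partial derivations are compatible with partial derivations. -/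
variable {κ : Type*} [Field κ] {G : Type*} [AddCommGroup G] [LinearOrder G] [IsOrderedAddMonoid G] {n : ℕ}

/-- Chain rule for coordinates: `F.coord g = (F'.coord g) ⬝ (s)`. -/
lemma FreeData.coord_key (F F' : FreeData G n) (hH : F.H = F'.H) (g : G) :
    (fun j => ∑ i, F'.coord g i * F.coord (F'.u i) j) = F.coord g := by
  apply F.coord_unique
  have h1 : g - ∑ i, F'.coord g i • F'.u i ∈ F.H := hH ▸ F'.sub_mem g
  have h3 : ∑ i, F'.coord g i • (F'.u i - ∑ k, F.coord (F'.u i) k • F.u k) ∈ F.H :=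
    AddSubgroup.sum_mem _ fun i _ => AddSubgroup.zsmul_mem _ (F.sub_mem _) _
  have h4 := AddSubgroup.add_mem _ h1 h3
  convert h4 using 1
  simp only [smul_sub, Finset.sum_sub_distrib, Finset.smul_sum, ← mul_smul, Finset.sum_smul]
  rw [Finset.sum_comm]
  abel

/-- The coordinates of a generator are a Kronecker delta. -/
lemma FreeData.coord_self (F : FreeData G n) (j : Fin n) :
    F.coord (F.u j) = Pi.single j 1 := by
  refine (F.coord_unique _ _ ?_).symm
  simp [Pi.single_apply, ite_smul]

/-- `∂Yᵢ/∂Xⱼ` is the single term `s i j • e^{Yᵢ - Xⱼ}`. -/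
lemma FreeData.pderiv_X (F F' : FreeData G n) (i j : Fin n) :
    F.pderiv j (F'.X κ i) =
      HahnSeries.single (F'.u i - F.u j) ((F.coord (F'.u i) j : ℤ) : κ) := by
  ext g
  show (F.coord (g + F.u j) j : κ) * (HahnSeries.single (F'.u i) (1 : κ)).coeff (g + F.u j) = _
  by_cases h : g + F.u j = F'.u i
  · have hg : g = F'.u i - F.u j := by rw [← h]; abel
    rw [h, hg]
    simp
  · rw [HahnSeries.coeff_single_of_ne h, HahnSeries.coeff_single_of_ne, mul_zero]
    intro hg
    exact h (by rw [hg]; abel)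

/-- Compatibility of partial derivations: if `X₁,…,Xₙ` and `Y₁,…,Yₙ` are two sets of
variables of `κ[[e^G]]` over `κ[[e^H]]` (given by free generating data `F`, `F'` with
the same subgroup `H`), related by `Yᵢ = e^{hᵢ} X₁^{s_{i1}} ⋯ Xₙ^{s_{in}}` where
`s i j = F.coord (F'.u i) j`, then the integer matrix `(s_{ij})` is invertible over
`ℤ`, and the chain rule `∂Φ/∂Xⱼ = Σᵢ (∂Φ/∂Yᵢ)(∂Yᵢ/∂Xⱼ)` holds. -/
theorem pderiv_compatible (F F' : FreeData G n) (hH : F.H = F'.H) :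
    IsUnit (Matrix.of fun i j => F.coord (F'.u i) j).det ∧
    ∀ (Φ : HahnSeries G κ) (j : Fin n),
      F.pderiv j Φ = ∑ i, F'.pderiv i Φ * F.pderiv j (F'.X κ i) := by
  constructor
  · refine IsUnit.of_mul_eq_one ((Matrix.of fun j i => F'.coord (F.u j) i).det) ?_
    rw [mul_comm, ← Matrix.det_mul, ← Matrix.det_one (n := Fin n)]
    congr 1
    ext j k
    simp only [Matrix.mul_apply, Matrix.of_apply]
    have := congrFun (F.coord_key F' hH (F.u j)) k
    rw [this, F.coord_self, Matrix.one_apply, Pi.single_apply]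
    by_cases hjk : j = k
    · simp [hjk]
    · rw [if_neg (Ne.symm hjk), if_neg hjk]
  · intro Φ j
    ext g
    rw [show ((∑ i, F'.pderiv i Φ * F.pderiv j (F'.X κ i)).coeff g)
        = ∑ i, (F'.pderiv i Φ * F.pderiv j (F'.X κ i)).coeff g from
      map_sum (HahnSeries.coeff.addMonoidHom g) _ _]
    have hcoeff : ∀ i : Fin n, (F'.pderiv i Φ * F.pderiv j (F'.X κ i)).coeff g
        = ((F'.coord (g + F.u j) i : κ) * Φ.coeff (g + F.u j)) *
          ((F.coord (F'.u i) j : ℤ) : κ) := by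
      intro i
      rw [F.pderiv_X F' i j]
      have hg : g = (g - (F'.u i - F.u j)) + (F'.u i - F.u j) := by abel
      rw [hg, HahnSeries.coeff_mul_single_add]
      show (F'.coord (g - (F'.u i - F.u j) + F'.u i) i : κ) *
          Φ.coeff (g - (F'.u i - F.u j) + F'.u i) * _ = _
      have : g - (F'.u i - F.u j) + F'.u i = g + F.u j := by abel
      rw [this, ← hg]
    simp only [hcoeff]
    show (F.coord (g + F.u j) j : κ) * Φ.coeff (g + F.u j) = _
    have := congrFun (F.coord_key F' hH (g + F.u j)) j
    rw [← this]
    push_cast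
    rw [Finset.sum_mul]
    congr 1
    ext i
    ring
end

section
/- If a κ[[e^H]]-derivation D on κ[[e^G]] satisfies D(Φ) = Σᵢ (∂Φ/∂Xᵢ) D(Xᵢ) for one set of variables X₁,…,Xₙ and all Φ, then the same identity D(Φ) = Σᵢ (∂Φ/∂Yᵢ) D(Yᵢ) holds for every set of variables Y₁,…,Yₙ. -/
variable {κ : Type*} [Field κ] {G : Type*} [AddCommGroup G] [LinearOrder G] [IsOrderedAddMonoid G] {n : ℕ}

lemma coord_chain (F F' : FreeData G n) (hH' : F'.H = F.H) (x : G) (i : Fin n) :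
    (∑ j, F'.coord x j * F.coord (F'.u j) i) = F.coord x i := by
  have key : x - ∑ i, (∑ j, F'.coord x j * F.coord (F'.u j) i) • F.u i ∈ F.H := by
    have h1 : x - ∑ j, F'.coord x j • F'.u j ∈ F.H := hH' ▸ F'.sub_mem x
    have h2 : ∀ j, F'.coord x j • (F'.u j - ∑ i, F.coord (F'.u j) i • F.u i) ∈ F.H :=
      fun j => AddSubgroup.zsmul_mem _ (F.sub_mem _) _
    have h3 : (x - ∑ j, F'.coord x j • F'.u j)
        + ∑ j, F'.coord x j • (F'.u j - ∑ i, F.coord (F'.u j) i • F.u i) ∈ F.H :=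
      AddSubgroup.add_mem _ h1 (AddSubgroup.sum_mem _ (fun j _ => h2 j))
    have heq : (x - ∑ j, F'.coord x j • F'.u j)
        + ∑ j, F'.coord x j • (F'.u j - ∑ i, F.coord (F'.u j) i • F.u i)
        = x - ∑ i, (∑ j, F'.coord x j * F.coord (F'.u j) i) • F.u i := by
      simp only [Finset.sum_smul, mul_smul, Finset.smul_sum, smul_sub,
        Finset.sum_sub_distrib]
      rw [Finset.sum_comm]
      abel
    rwa [heq] at h3
  exact congrFun (F.coord_unique x _ key) i

lemma mul_single_coeff {a g : G} {r : κ} {x : HahnSeries G κ} :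
    (x * HahnSeries.single a r).coeff g = x.coeff (g - a) * r := by
  have := HahnSeries.coeff_mul_single_add (r := r) (x := x) (a := g - a) (b := a)
  rwa [sub_add_cancel] at this

lemma pderiv_single (F : FreeData G n) (i : Fin n) (a : G) (r : κ) :
    F.pderiv i (HahnSeries.single a r) =
      HahnSeries.single (a - F.u i) ((F.coord a i : κ) * r) := by
  ext g
  rw [HahnSeries.coeff_single]
  show (F.coord (g + F.u i) i : κ) * (HahnSeries.single a r).coeff (g + F.u i) = _
  rw [HahnSeries.coeff_single]
  by_cases h : g + F.u i = a
  · rw [if_pos h, if_pos (by rw [← h]; abel), h]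
  · rw [if_neg h, if_neg (fun hg => h (by rw [hg]; abel)), mul_zero]

lemma pderiv_chain (F F' : FreeData G n) (hH' : F'.H = F.H) (i : Fin n) (Φ : HahnSeries G κ) :
    F.pderiv i Φ = ∑ j, F'.pderiv j Φ * F.pderiv i (F'.X κ j) := by
  ext g
  rw [show ((∑ j, F'.pderiv j Φ * F.pderiv i (F'.X κ j)).coeff g)
      = ∑ j, (F'.pderiv j Φ * F.pderiv i (F'.X κ j)).coeff g from
    map_sum (HahnSeries.coeff.addMonoidHom g) _ _]
  simp only [FreeData.X, pderiv_single, mul_one, mul_single_coeff]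
  show (F.coord (g + F.u i) i : κ) * Φ.coeff (g + F.u i) = _
  have hc : ∀ j : Fin n, (F'.pderiv j Φ).coeff (g - (F'.u j - F.u i))
      = (F'.coord (g + F.u i) j : κ) * Φ.coeff (g + F.u i) := by
    intro j
    show (F'.coord (g - (F'.u j - F.u i) + F'.u j) j : κ)
        * Φ.coeff (g - (F'.u j - F.u i) + F'.u j) = _
    rw [show g - (F'.u j - F.u i) + F'.u j = g + F.u i by abel]
  simp only [hc]
  rw [← coord_chain F F' hH' (g + F.u i) i]
  push_cast
  rw [Finset.sum_mul]
  congr 1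
  ext j
  ring

/-- Criterion of compatibility: if a `κ[[e^H]]`-derivation `D` on `κ[[e^G]]` (an
additive map into a `κ[[e^G]]`-vector space satisfying the Leibniz rule and killing
series supported in `H`) satisfies `D(Φ) = Σᵢ (∂Φ/∂Xᵢ) D(Xᵢ)` for one set of
variables `X₁,…,Xₙ`, then `D(Φ) = Σᵢ (∂Φ/∂Yᵢ) D(Yᵢ)` for every set of variables
`Y₁,…,Yₙ` (i.e. for every free generating data `F'` with the same subgroup `H`). -/
theorem compatibility_criterion (F : FreeData G n)
    {V : Type*} [AddCommGroup V] [Module (HahnSeries G κ) V]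
    (D : HahnSeries G κ → V)
    (hadd : ∀ Φ Ψ : HahnSeries G κ, D (Φ + Ψ) = D Φ + D Ψ)
    (hleib : ∀ Φ Ψ : HahnSeries G κ, D (Φ * Ψ) = Φ • D Ψ + Ψ • D Φ)
    (hH : ∀ φ : HahnSeries G κ, (∀ g : G, φ.coeff g ≠ 0 → g ∈ F.H) → D φ = 0)
    (hcomp : ∀ Φ : HahnSeries G κ, D Φ = ∑ i, F.pderiv i Φ • D (F.X κ i)) :
    ∀ F' : FreeData G n, F'.H = F.H →
      ∀ Φ : HahnSeries G κ, D Φ = ∑ i, F'.pderiv i Φ • D (F'.X κ i) := by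
  intro F' hH' Φ
  rw [hcomp Φ]
  calc ∑ i, F.pderiv i Φ • D (F.X κ i)
      = ∑ i, (∑ j, F'.pderiv j Φ * F.pderiv i (F'.X κ j)) • D (F.X κ i) :=
        Finset.sum_congr rfl fun i _ => by rw [pderiv_chain F F' hH' i Φ]
    _ = ∑ j, ∑ i, F'.pderiv j Φ • (F.pderiv i (F'.X κ j) • D (F.X κ i)) := by
        rw [Finset.sum_comm]
        simp only [Finset.sum_smul, smul_smul]
    _ = ∑ j, F'.pderiv j Φ • D (F'.X κ j) := by
        refine Finset.sum_congr rfl fun j _ => ?_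
        rw [← Finset.smul_sum, ← hcomp]
end

section
/- If Φ₁,…,Φₙ form a system of parameters of κ[[e^G]] over κ[[e^H]] (i.e., the determinant of their multiplicity matrix with respect to some set of variables is nonzero in κ), then dlog Φ₁ ∧ ⋯ ∧ dlog Φₙ is a basis of the one-dimensional κ[[e^G]]-vector space ∧ⁿΩ_{G/H}; in particular it is nonzero. -/
variable {κ : Type*} [Field κ] {G : Type*} [AddCommGroup G] [LinearOrder G] [IsOrderedAddMonoid G] {n : ℕ}

/-- The subring of Hahn series supported on nonnegative exponents. -/
def nonnegSubring (κ : Type*) [Field κ] (G : Type*) [AddCommGroup G] [LinearOrder G] [IsOrderedAddMonoid G] :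
    Subring (HahnSeries G κ) where
  carrier := {x | ∀ g : G, g < 0 → x.coeff g = 0}
  zero_mem' := fun g _ => rfl
  one_mem' := fun g hg => by
    rw [HahnSeries.coeff_one, if_neg hg.ne]
  add_mem' := fun {x y} hx hy g hg => by
    rw [HahnSeries.coeff_add, hx g hg, hy g hg, add_zero]
  neg_mem' := fun {x} hx g hg => by
    rw [HahnSeries.coeff_neg, hx g hg, neg_zero]
  mul_mem' := fun {x y} hx hy g hg => by
    by_contra h
    obtain ⟨a, ha, b, hb, hab⟩ :=
      HahnSeries.support_mul_subset (Function.mem_support.2 h)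
    have h0a : (0 : G) ≤ a := le_of_not_gt fun hlt => ha (hx a hlt)
    have h0b : (0 : G) ≤ b := le_of_not_gt fun hlt => hb (hy b hlt)
    rw [← hab] at hg
    exact absurd hg (not_lt.2 (add_nonneg h0a h0b))

/-- Evaluation at exponent `0` is a ring hom on nonnegatively supported series. -/
noncomputable def ev0 (κ : Type*) [Field κ] (G : Type*) [AddCommGroup G] [LinearOrder G] [IsOrderedAddMonoid G] :
    nonnegSubring κ G →+* κ where
  toFun x := (x : HahnSeries G κ).coeff 0
  map_one' := by simp [HahnSeries.coeff_one]
  map_zero' := rfl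
  map_add' x y := HahnSeries.coeff_add
  map_mul' x y := by
    show ((x : HahnSeries G κ) * y).coeff 0 = _
    rw [HahnSeries.coeff_mul]
    have hsub : Finset.antidiagonal (x : HahnSeries G κ).isPWO_support
        (y : HahnSeries G κ).isPWO_support (0 : G) ⊆ {((0 : G), (0 : G))} := by
      intro ij hij
      rw [Finset.mem_antidiagonal] at hij
      obtain ⟨h1, h2, h3⟩ := hij
      have ha : (0 : G) ≤ ij.1 := le_of_not_gt fun hlt => h1 (x.2 ij.1 hlt)
      have hb : (0 : G) ≤ ij.2 := le_of_not_gt fun hlt => h2 (y.2 ij.2 hlt)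
      have h1' : ij.1 = 0 := le_antisymm (by
        have : ij.1 = -ij.2 := eq_neg_of_add_eq_zero_left h3
        rw [this]; exact neg_nonpos.2 hb) ha
      have h2' : ij.2 = 0 := by rwa [h1', zero_add] at h3
      rw [Finset.mem_singleton]
      exact Prod.ext h1' h2'
    rw [Finset.sum_subset hsub ?_, Finset.sum_singleton]
    intro z hzmem hz
    rw [Finset.mem_singleton] at hzmem
    subst hzmem
    rw [Finset.mem_antidiagonal] at hz
    by_cases h : (x : HahnSeries G κ).coeff 0 = 0
    · simp [h]
    · by_cases h' : (y : HahnSeries G κ).coeff 0 = 0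
      · simp [h']
      · exact absurd ⟨h, h', add_zero 0⟩ hz

theorem ev0_apply (x : nonnegSubring κ G) : ev0 κ G x = (x : HahnSeries G κ).coeff 0 := rfl

theorem X_mul_pderiv_coeff (F : FreeData G n) (k : Fin n) (Φ : HahnSeries G κ) (g : G) :
    (F.X κ k * F.pderiv k Φ).coeff g = (F.coord g k : κ) * Φ.coeff g := by
  have hg : g = (g - F.u k) + F.u k := (sub_add_cancel g (F.u k)).symm
  rw [FreeData.X, hg, HahnSeries.coeff_single_mul_add, one_mul]
  rfl

theorem key_coeff (F : FreeData G n) (k : Fin n) {Φ : HahnSeries G κ} (hΦ : Φ ≠ 0) :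
    (∀ g : G, g < 0 → (F.X κ k * F.pderiv k Φ / Φ).coeff g = 0) ∧
    (F.X κ k * F.pderiv k Φ / Φ).coeff 0 = (F.coord Φ.order k : κ) := by
  set c : κ := (F.coord Φ.order k : κ) with hc
  set B : HahnSeries G κ := F.X κ k * F.pderiv k Φ - HahnSeries.single 0 c * Φ with hB
  have hBcoeff : ∀ g : G, B.coeff g = ((F.coord g k : κ) - c) * Φ.coeff g := by
    intro g
    rw [hB, HahnSeries.coeff_sub, X_mul_pderiv_coeff, HahnSeries.coeff_single_zero_mul, sub_mul]
  have hBΦ : ∀ g : G, g ≤ 0 → (B / Φ).coeff g = 0 := by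
    intro g hg
    by_cases hB0 : B = 0
    · simp [hB0]
    · have hq : B / Φ ≠ 0 := div_ne_zero hB0 hΦ
      have horder : Φ.order < B.order := by
        have hmem : B.coeff B.order ≠ 0 := mt HahnSeries.coeff_order_eq_zero.1 hB0
        have hsupp : Φ.coeff B.order ≠ 0 := by
          intro h; exact hmem (by rw [hBcoeff, h, mul_zero])
        have hle : Φ.order ≤ B.order := HahnSeries.order_le_of_coeff_ne_zero hsupp
        rcases lt_or_eq_of_le hle with h | h
        · exact h
        · exact absurd (by rw [hBcoeff, ← h, hc, sub_self, zero_mul]) hmem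
      have hordq : (0 : G) < (B / Φ).order := by
        have h1 : B / Φ * Φ = B := div_mul_cancel₀ B hΦ
        have h2 : (B / Φ).order + Φ.order = B.order := by
          rw [← HahnSeries.order_mul hq hΦ, h1]
        by_contra hle
        push_neg at hle
        have h3 := add_le_add_left hle Φ.order
        rw [h2, zero_add] at h3
        exact absurd horder (not_lt.2 h3)
      exact HahnSeries.coeff_eq_zero_of_lt_order (lt_of_le_of_lt hg hordq)
  have hsplit : F.X κ k * F.pderiv k Φ / Φ = B / Φ + HahnSeries.single 0 c := by
    rw [hB, sub_div, mul_div_cancel_right₀ _ hΦ, sub_add_cancel]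
  constructor
  · intro g hg
    rw [hsplit, HahnSeries.coeff_add, hBΦ g hg.le, HahnSeries.coeff_single_of_ne hg.ne, add_zero]
  · rw [hsplit, HahnSeries.coeff_add, hBΦ 0 le_rfl, zero_add, HahnSeries.coeff_single_same]

/-- If `Φ₁,…,Φₙ` form a system of parameters (the determinant of their multiplicity
matrix with respect to the variables is nonzero in `κ`), then
`dlog Φ₁ ∧ ⋯ ∧ dlog Φₙ` is a basis of the one-dimensional space `∧ⁿΩ_{G/H}`.
In coordinates `∧ⁿΩ_{G/H} ≅ κ[[e^G]]·(dX₁∧⋯∧dXₙ)`, the form is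
`det(∂Φᵢ/∂Xₖ / Φᵢ)·dX₁∧⋯∧dXₙ`; being a basis means the determinant is nonzero
and every element is a unique `κ[[e^G]]`-multiple of it. -/
theorem dlog_parameters_basis (F : FreeData G n)
    (Φ : Fin n → HahnSeries G κ) (hΦ : ∀ i, Φ i ≠ 0)
    (hpar : ((Matrix.of fun i j => F.coord ((Φ i).order) j).det : κ) ≠ 0) :
    (Matrix.of fun i k => F.pderiv k (Φ i) / Φ i).det ≠ 0 ∧
    ∀ ω : HahnSeries G κ,
      ∃! c : HahnSeries G κ,
        ω = c * (Matrix.of fun i k => F.pderiv k (Φ i) / Φ i).det := by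
  classical
  set M : Matrix (Fin n) (Fin n) (HahnSeries G κ) :=
    Matrix.of fun i k => F.pderiv k (Φ i) / Φ i with hM
  have hdet : M.det ≠ 0 := by
    set N : Matrix (Fin n) (Fin n) (nonnegSubring κ G) := fun i k =>
      ⟨F.X κ k * (F.pderiv k (Φ i) / Φ i), by
        intro g hg
        rw [← mul_div_assoc]
        exact (key_coeff F k (hΦ i)).1 g hg⟩ with hN
    have hNdet : ((N.det : nonnegSubring κ G) : HahnSeries G κ) = (∏ k, F.X κ k) * M.det := by
      calc ((N.det : nonnegSubring κ G) : HahnSeries G κ)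
          = (((nonnegSubring κ G).subtype.mapMatrix N)).det := by
            exact RingHom.map_det ((nonnegSubring κ G).subtype) N
        _ = (Matrix.of fun i k => F.X κ k * M i k).det := by
            congr 1
        _ = (∏ k, F.X κ k) * M.det := Matrix.det_mul_row _ _
    have h1 : (ev0 κ G).mapMatrix N =
        (Int.castRingHom κ).mapMatrix (Matrix.of fun i j => F.coord ((Φ i).order) j) := by
      ext i k
      show ((N i k : HahnSeries G κ)).coeff 0 = ((F.coord ((Φ i).order) k : ℤ) : κ)
      show (F.X κ k * (F.pderiv k (Φ i) / Φ i)).coeff 0 = _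
      rw [← mul_div_assoc]
      exact (key_coeff F k (hΦ i)).2
    have hev : ev0 κ G N.det = ((Matrix.of fun i j => F.coord ((Φ i).order) j).det : κ) := by
      rw [RingHom.map_det, h1, ← RingHom.map_det]
      rfl
    have hnz : ((N.det : nonnegSubring κ G) : HahnSeries G κ) ≠ 0 := by
      intro h
      apply hpar
      rw [← hev, ev0_apply, h, HahnSeries.coeff_zero]
    rw [hNdet] at hnz
    exact (mul_ne_zero_iff.1 hnz).2
  refine ⟨hdet, fun ω => ⟨ω / M.det, (div_mul_cancel₀ ω hdet).symm, fun y hy => ?_⟩⟩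
  rw [hy, mul_div_cancel_right₀ _ hdet]
end

section
/- (Characterization of regularity) A system of parameters Φ₁,…,Φₙ of κ[[e^G]] over κ[[e^H]] is regular (i.e., every Ψ ∈ κ[[e^G]] admits a unique representation Ψ = Σ φ_{i₁…iₙ} Φ₁^{i₁}⋯Φₙ^{iₙ} with Σ φ_{i₁…iₙ} Y₁^{i₁}⋯Yₙ^{iₙ} ∈ κ[[e^G]], where Φᵢ = aᵢYᵢ(1+Φ̃ᵢ) are the factorizations) if and only if the determinant of the multiplicity matrix of Φ₁,…,Φₙ with respect to a set of variables is ±1, i.e., invertible in ℤ. -/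
variable {κ : Type*} [Field κ] {G : Type*} [AddCommGroup G] [LinearOrder G] [IsOrderedAddMonoid G] {n : ℕ}

section AuxCoord

variable (F : FreeData G n)

theorem FreeData.coord_add' (g g' : G) :
    F.coord (g + g') = F.coord g + F.coord g' := by
  refine (F.coord_unique _ _ ?_).symm
  have key : (g + g') - ∑ i, (F.coord g + F.coord g') i • F.u i =
      (g - ∑ i, F.coord g i • F.u i) + (g' - ∑ i, F.coord g' i • F.u i) := by
    simp only [Pi.add_apply, add_smul, Finset.sum_add_distrib]
    abel
  rw [key]
  exact AddSubgroup.add_mem _ (F.sub_mem g) (F.sub_mem g')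

/-- `coord` as an additive monoid hom. -/
noncomputable def FreeData.coordHom : G →+ (Fin n → ℤ) :=
  AddMonoidHom.mk' F.coord (F.coord_add')

@[simp] theorem FreeData.coordHom_apply (g : G) : F.coordHom g = F.coord g := rfl

theorem FreeData.coord_zsmul (k : ℤ) (g : G) : F.coord (k • g) = k • F.coord g := by
  refine (F.coord_unique _ _ ?_).symm
  have key : (k • g) - ∑ i, (k • F.coord g) i • F.u i =
      k • (g - ∑ i, F.coord g i • F.u i) := by
    simp only [Pi.smul_apply, smul_sub, Finset.smul_sum, smul_eq_mul, mul_smul]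
  rw [key]
  exact AddSubgroup.zsmul_mem _ (F.sub_mem g) k

theorem FreeData.coord_of_mem_s19 {g : G} (hg : g ∈ F.H) : F.coord g = 0 := by
  refine (F.coord_unique g 0 ?_).symm
  simpa using hg

theorem FreeData.mem_of_coord_eq_zero {g : G} (hg : F.coord g = 0) : g ∈ F.H := by
  have := F.sub_mem g
  rw [hg] at this
  simpa using this

theorem FreeData.coord_u (j : Fin n) : F.coord (F.u j) = Pi.single j 1 := by
  refine (F.coord_unique _ _ ?_).symm
  have key : ∑ i, (Pi.single j (1 : ℤ) : Fin n → ℤ) i • F.u i = F.u j := by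
    rw [Finset.sum_eq_single j]
    · simp
    · intro b _ hb
      simp [Pi.single_apply, hb]
    · simp
  rw [key]
  simpa using AddSubgroup.zero_mem F.H

end AuxCoord
open HahnSeries Matrix in
/-- The multiplicity matrix of a system of parameters. -/
noncomputable def FreeData.smat (F : FreeData G n) (Φ : Fin n → HahnSeries G κ) :
    Matrix (Fin n) (Fin n) ℤ :=
  Matrix.of fun i j => F.coord ((Φ i).order) j

open Matrix

section AuxMatrix

variable (F : FreeData G n) (Φ : Fin n → HahnSeries G κ)

theorem FreeData.coord_lin (m : Fin n → ℤ) :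
    F.coord (∑ i, m i • (Φ i).order) = m ᵥ* F.smat Φ := by
  have : F.coord (∑ i, m i • (Φ i).order) = ∑ i, m i • F.coord ((Φ i).order) := by
    rw [← F.coordHom_apply, map_sum]
    simp [F.coord_zsmul]
  rw [this]
  funext j
  simp [Matrix.vecMul, dotProduct, FreeData.smat]

theorem FreeData.vecMul_injective (hdet : (F.smat Φ).det ≠ 0) {m m' : Fin n → ℤ}
    (h : m ᵥ* F.smat Φ = m' ᵥ* F.smat Φ) : m = m' := by
  have h2 : (m ᵥ* F.smat Φ) ᵥ* (F.smat Φ).adjugate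
      = (m' ᵥ* F.smat Φ) ᵥ* (F.smat Φ).adjugate := by rw [h]
  rw [Matrix.vecMul_vecMul, Matrix.vecMul_vecMul, Matrix.mul_adjugate] at h2
  have h3 : (F.smat Φ).det • m = (F.smat Φ).det • m' := by
    simpa [Matrix.smul_vecMul] using h2
  exact smul_right_injective (Fin n → ℤ) hdet h3

end AuxMatrix

namespace HahnSeries

theorem order_inv' (x : HahnSeries G κ) (hx : x ≠ 0) : (x⁻¹).order = -x.order := by
  have hinv : x⁻¹ ≠ 0 := inv_ne_zero hx
  have h := order_mul hx hinv
  rw [mul_inv_cancel₀ hx, order_one] at h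
  exact eq_neg_of_add_eq_zero_left (by rw [add_comm]; exact h.symm)

theorem order_zpow' (x : HahnSeries G κ) (hx : x ≠ 0) (k : ℤ) :
    (x ^ k).order = k • x.order := by
  cases k with
  | ofNat m => rw [Int.ofNat_eq_coe, zpow_natCast, order_pow, natCast_zsmul]
  | negSucc m =>
      rw [zpow_negSucc, order_inv' _ (pow_ne_zero _ hx), order_pow, negSucc_zsmul]

theorem order_prod' {ι : Type*} (t : Finset ι) (f : ι → HahnSeries G κ)
    (hf : ∀ i ∈ t, f i ≠ 0) :
    (∏ i ∈ t, f i).order = ∑ i ∈ t, (f i).order := by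
  classical
  induction t using Finset.induction with
  | empty => simp [order_one]
  | insert a t' hnot ih =>
      rw [Finset.prod_insert hnot, Finset.sum_insert hnot,
        order_mul (hf a (Finset.mem_insert_self a t'))
          (Finset.prod_ne_zero_iff.mpr fun i hi => hf i (Finset.mem_insert_of_mem hi)),
        ih fun i hi => hf i (Finset.mem_insert_of_mem hi)]

theorem mul_single_coeff' (x : HahnSeries G κ) (b g : G) (r : κ) :
    (x * single b r).coeff g = x.coeff (g - b) * r := by
  have h := coeff_mul_single_add (r := r) (x := x) (a := g - b) (b := b)
  rwa [sub_add_cancel] at h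

theorem single_mul_coeff' (x : HahnSeries G κ) (b g : G) (r : κ) :
    (single b r * x).coeff g = r * x.coeff (g - b) := by
  have h := coeff_single_mul_add (r := r) (x := x) (a := g - b) (b := b)
  rwa [sub_add_cancel] at h

theorem prod_single' {ι : Type*} (t : Finset ι) (c : ι → G) (r : ι → κ) :
    (∏ i ∈ t, (single (c i) (r i) : HahnSeries G κ))
      = single (∑ i ∈ t, c i) (∏ i ∈ t, r i) := by
  classical
  induction t using Finset.induction with
  | empty => simpa using single_zero_one.symm
  | insert a t' hnot ih =>
      rw [Finset.prod_insert hnot, Finset.sum_insert hnot, Finset.prod_insert hnot, ih,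
        single_mul_single]

theorem single_zpow' (b : G) (r : κ) (hr : r ≠ 0) (k : ℤ) :
    (single b r : HahnSeries G κ) ^ k = single (k • b) (r ^ k) := by
  cases k with
  | ofNat m =>
      rw [Int.ofNat_eq_coe, zpow_natCast, single_pow, natCast_zsmul, zpow_natCast]
  | negSucc m =>
      rw [zpow_negSucc, single_pow]
      refine inv_eq_of_mul_eq_one_right ?_
      rw [single_mul_single, single_zero_one.symm]
      congr 1
      · rw [negSucc_zsmul]; abel
      · rw [zpow_negSucc, mul_inv_cancel₀ (pow_ne_zero _ hr)]

theorem mul_coeff_superset (x y : HahnSeries G κ) {A B : Set G} (hA : A.IsPWO) (hB : B.IsPWO)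
    (hx : x.support ⊆ A) (hy : y.support ⊆ B) (g : G) :
    (x * y).coeff g = ∑ p ∈ Finset.antidiagonal hA hB g, x.coeff p.1 * y.coeff p.2 := by
  rw [coeff_mul_left' hA hx]
  refine Finset.sum_subset ?_ ?_
  · intro p hp
    rw [Finset.mem_antidiagonal] at hp ⊢
    exact ⟨hp.1, hy hp.2.1, hp.2.2⟩
  · intro p hp hnp
    by_cases h : y.coeff p.2 = 0
    · rw [h, mul_zero]
    exfalso
    apply hnp
    rw [Finset.mem_antidiagonal] at hp ⊢
    exact ⟨hp.1, h, hp.2.2⟩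

end HahnSeries
section CoreLemma

open HahnSeries Matrix

theorem core_nonvanishing (F : FreeData G n) (Φ : Fin n → HahnSeries G κ)
    (hΦ : ∀ i, Φ i ≠ 0) (hdet : (F.smat Φ).det ≠ 0)
    (φ : (Fin n → ℤ) → HahnSeries G κ)
    (h1 : ∀ m, ∀ g : G, (φ m).coeff g ≠ 0 → g ∈ F.H)
    (h3 : ∃ Θ : HahnSeries G κ, ∀ g : G, Θ.coeff g =
      ∑ᶠ m : Fin n → ℤ, (φ m * HahnSeries.single (∑ i, m i • (Φ i).order) (1 : κ)).coeff g)
    (hne : ∃ m, φ m ≠ 0) :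
    ∃ (g₀ : G) (m₁ : Fin n → ℤ), φ m₁ ≠ 0 ∧ F.coord g₀ = m₁ ᵥ* F.smat Φ ∧
      (∑ᶠ m : Fin n → ℤ, (φ m * ∏ i, Φ i ^ m i).coeff g₀) ≠ 0 := by
  obtain ⟨Θ, hΘ⟩ := h3
  set τ : (Fin n → ℤ) → G := fun m => (φ m).order + ∑ i, m i • (Φ i).order with hτ
  have hordH : ∀ m, φ m ≠ 0 → (φ m).order ∈ F.H :=
    fun m hm => h1 m _ (coeff_order_eq_zero.not.mpr hm)
  have hcoordτ : ∀ m, φ m ≠ 0 → F.coord (τ m) = m ᵥ* F.smat Φ := by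
    intro m hm
    rw [hτ]
    rw [F.coord_add', F.coord_of_mem_s19 (hordH m hm), F.coord_lin, zero_add]
  have hsingle : ∀ (m' : Fin n → ℤ) (g : G),
      (φ m' * HahnSeries.single (∑ i, m' i • (Φ i).order) (1 : κ)).coeff g
        = (φ m').coeff (g - ∑ i, m' i • (Φ i).order) := by
    intro m' g; rw [mul_single_coeff', mul_one]
  have hcoord_of_ne : ∀ (m' : Fin n → ℤ) (g : G),
      (φ m').coeff (g - ∑ i, m' i • (Φ i).order) ≠ 0 → F.coord g = m' ᵥ* F.smat Φ := by
    intro m' g hc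
    have hmem : g - ∑ i, m' i • (Φ i).order ∈ F.H := h1 m' _ hc
    have h0 := F.coord_of_mem_s19 hmem
    rw [← F.coordHom_apply, map_sub, F.coordHom_apply, F.coordHom_apply, sub_eq_zero,
      F.coord_lin] at h0
    exact h0
  have hΘτ : ∀ m, φ m ≠ 0 → Θ.coeff (τ m) ≠ 0 := by
    intro m hm
    rw [hΘ]
    refine ne_of_eq_of_ne (finsum_eq_single _ m fun m' hm' => ?_) ?_
    · rw [hsingle]
      by_contra hc
      exact hm' (F.vecMul_injective Φ hdet ((hcoord_of_ne m' _ hc) ▸ hcoordτ m hm))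
    · rw [hsingle, hτ]
      simp only [add_sub_cancel_right]
      exact coeff_order_eq_zero.not.mpr hm
  obtain ⟨m₀, hm₀⟩ := hne
  have hSsub : τ '' {m | φ m ≠ 0} ⊆ Θ.support := by
    rintro _ ⟨m, hm, rfl⟩
    exact hΘτ m hm
  have hSwf : (τ '' {m | φ m ≠ 0}).IsWF := Θ.isWF_support.mono hSsub
  have hSne : (τ '' {m | φ m ≠ 0}).Nonempty := ⟨τ m₀, m₀, hm₀, rfl⟩
  obtain ⟨m₁, hm₁A, hm₁⟩ := hSwf.min_mem hSne
  have hP : ∀ m : Fin n → ℤ, (∏ i, Φ i ^ m i) ≠ 0 :=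
    fun m => Finset.prod_ne_zero_iff.mpr fun i _ => zpow_ne_zero _ (hΦ i)
  have hord : ∀ m, φ m ≠ 0 → (φ m * ∏ i, Φ i ^ m i).order = τ m := by
    intro m hm
    rw [order_mul hm (hP m), order_prod' _ _ fun i _ => zpow_ne_zero _ (hΦ i), hτ]
    congr 1
    exact Finset.sum_congr rfl fun i _ => order_zpow' _ (hΦ i) (m i)
  refine ⟨hSwf.min hSne, m₁, hm₁A, by rw [← hm₁]; exact hcoordτ m₁ hm₁A, ?_⟩
  refine ne_of_eq_of_ne (finsum_eq_single _ m₁ fun m hm => ?_) ?_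
  · by_cases hz : φ m = 0
    · simp [hz]
    have hle : hSwf.min hSne ≤ τ m := not_lt.mp (hSwf.not_lt_min hSne ⟨m, hz, rfl⟩)
    rcases lt_or_eq_of_le hle with hlt | heq
    · exact coeff_eq_zero_of_lt_order ((hord m hz).symm ▸ hlt)
    · exfalso
      apply hm
      apply F.vecMul_injective Φ hdet
      rw [← hcoordτ m hz, ← hcoordτ m₁ hm₁A, ← heq, hm₁]
  · rw [← hm₁, ← hord m₁ hm₁A]
    exact coeff_order_eq_zero.not.mpr (mul_ne_zero hm₁A (hP m₁))

end CoreLemma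
section Uniqueness

open HahnSeries Matrix

/-- The conditions for `φ` to be a regular representation of `Ψ`. -/
def IsRep (F : FreeData G n) (Φ : Fin n → HahnSeries G κ) (Ψ : HahnSeries G κ)
    (φ : (Fin n → ℤ) → HahnSeries G κ) : Prop :=
  (∀ m, ∀ g : G, (φ m).coeff g ≠ 0 → g ∈ F.H) ∧
  (∀ g : G, {m : Fin n → ℤ |
    (φ m * HahnSeries.single (∑ i, m i • (Φ i).order) (1 : κ)).coeff g ≠ 0}.Finite) ∧
  (∃ Θ : HahnSeries G κ, ∀ g : G, Θ.coeff g =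
    ∑ᶠ m : Fin n → ℤ,
      (φ m * HahnSeries.single (∑ i, m i • (Φ i).order) (1 : κ)).coeff g) ∧
  (∀ g : G, {m : Fin n → ℤ | (φ m * ∏ i, Φ i ^ m i).coeff g ≠ 0}.Finite) ∧
  (∀ g : G, Ψ.coeff g = ∑ᶠ m : Fin n → ℤ, (φ m * ∏ i, Φ i ^ m i).coeff g)

theorem rep_unique (F : FreeData G n) (Φ : Fin n → HahnSeries G κ)
    (hΦ : ∀ i, Φ i ≠ 0) (hdet : (F.smat Φ).det ≠ 0) (Ψ : HahnSeries G κ)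
    (φ φ' : (Fin n → ℤ) → HahnSeries G κ)
    (hrep : IsRep F Φ Ψ φ) (hrep' : IsRep F Φ Ψ φ') : φ = φ' := by
  obtain ⟨h1, h2, ⟨Θ1, hΘ1⟩, h4, h5⟩ := hrep
  obtain ⟨h1', h2', ⟨Θ2, hΘ2⟩, h4', h5'⟩ := hrep'
  by_contra hne
  have hdm : ∃ m, φ m - φ' m ≠ 0 := by
    by_contra hc
    push_neg at hc
    exact hne (funext fun m => sub_eq_zero.mp (hc m))
  set d : (Fin n → ℤ) → HahnSeries G κ := fun m => φ m - φ' m with hd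
  have hd1 : ∀ m, ∀ g : G, (d m).coeff g ≠ 0 → g ∈ F.H := by
    intro m g hg
    rw [hd] at hg
    simp only [coeff_sub] at hg
    by_cases hz : (φ m).coeff g = 0
    · rw [hz, zero_sub, neg_ne_zero] at hg
      exact h1' m g hg
    · exact h1 m g hz
  have hd3 : ∃ Θ : HahnSeries G κ, ∀ g : G, Θ.coeff g =
      ∑ᶠ m : Fin n → ℤ,
        (d m * HahnSeries.single (∑ i, m i • (Φ i).order) (1 : κ)).coeff g := by
    refine ⟨Θ1 - Θ2, fun g => ?_⟩
    have hsplit : ∀ m : Fin n → ℤ,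
        (d m * HahnSeries.single (∑ i, m i • (Φ i).order) (1 : κ)).coeff g =
        (φ m * HahnSeries.single (∑ i, m i • (Φ i).order) (1 : κ)).coeff g -
        (φ' m * HahnSeries.single (∑ i, m i • (Φ i).order) (1 : κ)).coeff g := by
      intro m
      rw [hd, sub_mul, coeff_sub]
    rw [coeff_sub, hΘ1 g, hΘ2 g]
    rw [← finsum_sub_distrib (h2 g) (h2' g)]
    exact (finsum_congr hsplit).symm
  obtain ⟨g₀, m₁, hm₁, hco, hfin⟩ :=
    core_nonvanishing F Φ hΦ hdet d hd1 hd3 hdm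
  apply hfin
  have hsplit : ∀ m : Fin n → ℤ,
      (d m * ∏ i, Φ i ^ m i).coeff g₀ =
      (φ m * ∏ i, Φ i ^ m i).coeff g₀ - (φ' m * ∏ i, Φ i ^ m i).coeff g₀ := by
    intro m
    rw [hd, sub_mul, coeff_sub]
  rw [finsum_congr hsplit, finsum_sub_distrib (h4 g₀) (h4' g₀), ← h5 g₀, ← h5' g₀, sub_self]

end Uniqueness
section GoodSets

open HahnSeries Matrix

variable (F : FreeData G n) (Φ : Fin n → HahnSeries G κ)

/-- The normalized unit part `Wᵢ = aᵢ⁻¹ Yᵢ⁻¹ Φᵢ = 1 + Φ̃ᵢ` of `Φᵢ`. -/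
noncomputable def Wfac (i : Fin n) : HahnSeries G κ :=
  HahnSeries.single (-(Φ i).order) ((Φ i).leadingCoeff)⁻¹ * Φ i

/-- The union of the supports of the `Φ̃ᵢ`. -/
noncomputable def baseSet : Set G :=
  ⋃ i ∈ (Finset.univ : Finset (Fin n)), ((Wfac Φ i).support \ {0})

/-- The submonoid generated by the supports of the `Φ̃ᵢ`. -/
noncomputable def Smon : Set G := (AddSubmonoid.closure (baseSet Φ) : AddSubmonoid G)

variable {Φ}

theorem Wfac_ne_zero (hΦ : ∀ i, Φ i ≠ 0) (i : Fin n) : Wfac Φ i ≠ 0 :=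
  mul_ne_zero (single_ne_zero (inv_ne_zero (leadingCoeff_ne_zero.mpr (hΦ i)))) (hΦ i)

theorem order_Wfac (hΦ : ∀ i, Φ i ≠ 0) (i : Fin n) : (Wfac Φ i).order = 0 := by
  rw [Wfac, order_mul (single_ne_zero (inv_ne_zero (leadingCoeff_ne_zero.mpr (hΦ i)))) (hΦ i),
    order_single (inv_ne_zero (leadingCoeff_ne_zero.mpr (hΦ i))), neg_add_cancel]

theorem coeff_zero_Wfac (hΦ : ∀ i, Φ i ≠ 0) (i : Fin n) : (Wfac Φ i).coeff 0 = 1 := by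
  have h := coeff_mul_order_add_order
    (HahnSeries.single (-(Φ i).order) ((Φ i).leadingCoeff)⁻¹) (Φ i)
  rw [order_single (inv_ne_zero (leadingCoeff_ne_zero.mpr (hΦ i))), leadingCoeff_of_single,
    neg_add_cancel, inv_mul_cancel₀ (leadingCoeff_ne_zero.mpr (hΦ i))] at h
  exact h

theorem Phi_factor (hΦ : ∀ i, Φ i ≠ 0) (i : Fin n) :
    Φ i = HahnSeries.single ((Φ i).order) ((Φ i).leadingCoeff) * Wfac Φ i := by
  rw [Wfac, ← mul_assoc, single_mul_single, add_neg_cancel,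
    mul_inv_cancel₀ (leadingCoeff_ne_zero.mpr (hΦ i)), single_zero_one, one_mul]

theorem baseSet_pos (hΦ : ∀ i, Φ i ≠ 0) : ∀ g ∈ baseSet Φ, 0 < g := by
  intro g hg
  simp only [baseSet, Set.mem_iUnion, Set.mem_diff, Set.mem_singleton_iff] at hg
  obtain ⟨i, _, ⟨hmem, hne⟩⟩ := hg
  refine lt_of_le_of_ne ?_ (Ne.symm hne)
  by_contra hlt
  push_neg at hlt
  exact Function.mem_support.mp hmem
    (coeff_eq_zero_of_lt_order (by rw [order_Wfac hΦ]; exact hlt))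

theorem baseSet_isPWO : (baseSet Φ).IsPWO :=
  (Finset.isPWO_bUnion _).mpr fun i _ => (Wfac Φ i).isPWO_support.mono Set.diff_subset

theorem Smon_isPWO (hΦ : ∀ i, Φ i ≠ 0) : (Smon Φ).IsPWO :=
  baseSet_isPWO.addSubmonoid_closure fun g hg => (baseSet_pos hΦ g hg).le

theorem Smon_zero_mem : (0 : G) ∈ Smon Φ := AddSubmonoid.zero_mem _

theorem Smon_add_mem {p q : G} (hp : p ∈ Smon Φ) (hq : q ∈ Smon Φ) : p + q ∈ Smon Φ :=
  AddSubmonoid.add_mem _ hp hq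

theorem Smon_nonneg (hΦ : ∀ i, Φ i ≠ 0) : ∀ g ∈ Smon Φ, 0 ≤ g := by
  intro g hg
  induction hg using AddSubmonoid.closure_induction with
  | mem x hx => exact (baseSet_pos hΦ x hx).le
  | zero => exact le_refl 0
  | add x y _ _ hx hy => exact add_nonneg hx hy

theorem Smon_sdiff_pos (hΦ : ∀ i, Φ i ≠ 0) : ∀ g ∈ Smon Φ \ {0}, 0 < g := fun g hg =>
  lt_of_le_of_ne (Smon_nonneg hΦ g hg.1) (Ne.symm hg.2)

theorem Smon_sdiff_isPWO (hΦ : ∀ i, Φ i ≠ 0) : (Smon Φ \ {0}).IsPWO :=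
  (Smon_isPWO hΦ).mono Set.diff_subset

variable (Φ)

/-- Series of the form `1 + (positive part supported in `Smon`)`. -/
def GoodSet : Set (HahnSeries G κ) :=
  {x | x.coeff 0 = 1 ∧ x.support ⊆ Smon Φ}

variable {Φ}

theorem GoodSet.ne_zero {x : HahnSeries G κ} (hx : x ∈ GoodSet Φ) : x ≠ 0 := by
  intro h
  rw [h] at hx
  exact one_ne_zero ((coeff_zero (a := (0:G))).symm.trans hx.1).symm

theorem GoodSet.order_eq_zero (hΦ : ∀ i, Φ i ≠ 0) {x : HahnSeries G κ}
    (hx : x ∈ GoodSet Φ) : x.order = 0 := by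
  refine le_antisymm (order_le_of_coeff_ne_zero (by rw [hx.1]; exact one_ne_zero)) ?_
  exact Smon_nonneg hΦ _ (hx.2 (Function.mem_support.mpr (coeff_order_eq_zero.not.mpr (GoodSet.ne_zero hx))))

theorem GoodSet.one_mem : (1 : HahnSeries G κ) ∈ GoodSet Φ := by
  constructor
  · simp
  · rw [support_one]
    intro g hg
    rw [Set.mem_singleton_iff.mp hg]
    exact Smon_zero_mem

theorem GoodSet.mul_mem (hΦ : ∀ i, Φ i ≠ 0) {x y : HahnSeries G κ}
    (hx : x ∈ GoodSet Φ) (hy : y ∈ GoodSet Φ) : x * y ∈ GoodSet Φ := by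
  constructor
  · have h := coeff_mul_order_add_order x y
    rw [GoodSet.order_eq_zero hΦ hx, GoodSet.order_eq_zero hΦ hy, add_zero, leadingCoeff_eq,
      leadingCoeff_eq, GoodSet.order_eq_zero hΦ hx, GoodSet.order_eq_zero hΦ hy, hx.1, hy.1,
      one_mul] at h
    exact h
  · intro g hg
    obtain ⟨p, hp, q, hq, rfl⟩ := support_mul_subset hg
    exact Smon_add_mem (hx.2 hp) (hy.2 hq)

theorem GoodSet.pow_mem (hΦ : ∀ i, Φ i ≠ 0) {x : HahnSeries G κ}
    (hx : x ∈ GoodSet Φ) (k : ℕ) : x ^ k ∈ GoodSet Φ := by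
  induction k with
  | zero => simpa using GoodSet.one_mem
  | succ k ih => rw [pow_succ]; exact GoodSet.mul_mem hΦ ih hx
section GoodInv

open HahnSeries Matrix

variable {F : FreeData G n} {Φ : Fin n → HahnSeries G κ}

theorem HahnSeries.mem_support' {x : HahnSeries G κ} {g : G} :
    g ∈ x.support ↔ x.coeff g ≠ 0 := Iff.rfl

theorem GoodSet.inv_mem (hΦ : ∀ i, Φ i ≠ 0) {x : HahnSeries G κ}
    (hx : x ∈ GoodSet Φ) : x⁻¹ ∈ GoodSet Φ := by
  set y : HahnSeries G κ := 1 - x with hy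
  have hysupp : y.support ⊆ Smon Φ \ {0} := by
    intro g hg
    have hgne : g ≠ 0 := by
      intro h0
      apply HahnSeries.mem_support'.mp hg
      rw [hy, coeff_sub, h0, coeff_one, if_pos rfl, hx.1, sub_self]
    have hcoeff : y.coeff g = -x.coeff g := by
      rw [hy, coeff_sub, coeff_one, if_neg hgne, zero_sub]
    refine ⟨hx.2 ?_, hgne⟩
    rw [HahnSeries.mem_support', ← neg_ne_zero, ← hcoeff]
    exact HahnSeries.mem_support'.mp hg
  have hyord : 0 < y.orderTop := by
    rcases eq_or_ne y 0 with h0 | h0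
    · rw [h0, orderTop_zero]
      exact WithTop.top_pos
    · rw [← order_eq_orderTop_of_ne_zero h0]
      have hordmem : y.order ∈ y.support := coeff_order_eq_zero.not.mpr h0
      exact WithTop.coe_lt_coe.mpr (Smon_sdiff_pos hΦ _ (hysupp hordmem))
  have hysucc : ∀ k : ℕ, (y ^ k).support ⊆ Smon Φ := by
    intro k
    induction k with
    | zero => intro g hg; rw [pow_zero, support_one, Set.mem_singleton_iff] at hg; rw [hg];
              exact Smon_zero_mem
    | succ k ih =>
        intro g hg
        rw [pow_succ] at hg
        obtain ⟨p, hp, q, hq, rfl⟩ := support_mul_subset hg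
        exact Smon_add_mem (ih hp) (hysupp hq).1
  have hmul := SummableFamily.one_sub_self_mul_hsum_powers hyord
  rw [show (1 : HahnSeries G κ) - y = x by rw [hy, sub_sub_cancel]] at hmul
  have hinv : x⁻¹ = (SummableFamily.powers y).hsum := inv_eq_of_mul_eq_one_right hmul
  constructor
  · rw [hinv, SummableFamily.coeff_hsum]
    rw [finsum_eq_single _ 0 ?hvanish]
    · simp
    case hvanish =>
      intro k hk
      obtain ⟨k', rfl⟩ := Nat.exists_eq_succ_of_ne_zero hk
      rw [SummableFamily.powers_of_orderTop_pos hyord]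
      by_contra hne0
      have hmem : (0 : G) ∈ (y ^ (k' + 1)).support := HahnSeries.mem_support'.mpr hne0
      rw [pow_succ] at hmem
      obtain ⟨p, hp, q, hq, hpq⟩ := support_mul_subset hmem
      have : (0 : G) < p + q :=
        add_pos_of_nonneg_of_pos (Smon_nonneg hΦ p (hysucc k' hp)) (Smon_sdiff_pos hΦ q (hysupp hq))
      have hpq' : p + q = 0 := hpq
      rw [hpq'] at this
      exact lt_irrefl _ this
  · rw [hinv]
    intro g hg
    obtain ⟨k, hk⟩ := Set.mem_iUnion.mp (SummableFamily.support_hsum_subset hg)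
    rw [SummableFamily.powers_of_orderTop_pos hyord] at hk
    exact hysucc k hk

theorem GoodSet.zpow_mem (hΦ : ∀ i, Φ i ≠ 0) {x : HahnSeries G κ}
    (hx : x ∈ GoodSet Φ) (k : ℤ) : x ^ k ∈ GoodSet Φ := by
  cases k with
  | ofNat m => rw [Int.ofNat_eq_coe, zpow_natCast]; exact GoodSet.pow_mem hΦ hx m
  | negSucc m => rw [zpow_negSucc]; exact GoodSet.inv_mem hΦ (GoodSet.pow_mem hΦ hx (m + 1))

theorem Wfac_mem_GoodSet (hΦ : ∀ i, Φ i ≠ 0) (i : Fin n) : Wfac Φ i ∈ GoodSet Φ := by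
  refine ⟨coeff_zero_Wfac hΦ i, ?_⟩
  intro g hg
  rcases eq_or_ne g 0 with rfl | hne
  · exact Smon_zero_mem
  · refine AddSubmonoid.subset_closure ?_
    simp only [baseSet, Set.mem_iUnion]
    exact ⟨i, Finset.mem_univ i, hg, hne⟩

/-- The unit part `V_m = ∏ Wᵢ^{mᵢ}` of the monomial `Φ^m`. -/
noncomputable def Vmon (Φ : Fin n → HahnSeries G κ) (m : Fin n → ℤ) : HahnSeries G κ :=
  ∏ i, Wfac Φ i ^ m i

theorem Vmon_mem_GoodSet (hΦ : ∀ i, Φ i ≠ 0) (m : Fin n → ℤ) : Vmon Φ m ∈ GoodSet Φ := by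
  rw [Vmon]
  refine Finset.prod_induction _ (· ∈ GoodSet Φ)
    (fun a b ha hb => GoodSet.mul_mem hΦ ha hb) GoodSet.one_mem
    (fun i _ => GoodSet.zpow_mem hΦ (Wfac_mem_GoodSet hΦ i) (m i))

theorem eps_support (hΦ : ∀ i, Φ i ≠ 0) (m : Fin n → ℤ) :
    (Vmon Φ m - 1).support ⊆ Smon Φ \ {0} := by
  have hv := Vmon_mem_GoodSet hΦ m
  intro g hg
  have hgne : g ≠ 0 := by
    intro h0
    apply HahnSeries.mem_support'.mp hg
    rw [coeff_sub, h0, coeff_one, if_pos rfl, hv.1, sub_self]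
  have hcoeff : (Vmon Φ m - 1).coeff g = (Vmon Φ m).coeff g := by
    rw [coeff_sub, coeff_one, if_neg hgne, sub_zero]
  refine ⟨hv.2 ?_, hgne⟩
  rw [HahnSeries.mem_support', ← hcoeff]
  exact HahnSeries.mem_support'.mp hg

end GoodInv
section Existence

open HahnSeries Matrix Pointwise

variable (F : FreeData G n) (Φ : Fin n → HahnSeries G κ)

/-- The component of a series supported on exponents with `Y`-coordinates `m ᵥ* s`. -/
noncomputable def Emap (m : Fin n → ℤ) (X : HahnSeries G κ) : HahnSeries G κ where
  coeff g := if F.coord g = m ᵥ* F.smat Φ then X.coeff g else 0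
  isPWO_support' := by
    refine X.isPWO_support.mono fun g hg => ?_
    by_cases h : F.coord g = m ᵥ* F.smat Φ
    · simpa [h] using hg
    · simp [h] at hg

theorem Emap_coeff (m : Fin n → ℤ) (X : HahnSeries G κ) (g : G) :
    (Emap F Φ m X).coeff g = if F.coord g = m ᵥ* F.smat Φ then X.coeff g else 0 := rfl

theorem Emap_support (m : Fin n → ℤ) (X : HahnSeries G κ) :
    (Emap F Φ m X).support ⊆ X.support := by
  intro g hg
  have hg' := HahnSeries.mem_support'.mp hg
  rw [Emap_coeff] at hg'
  by_cases h : F.coord g = m ᵥ* F.smat Φ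
  · rw [if_pos h] at hg'
    exact hg'
  · rw [if_neg h] at hg'
    exact absurd rfl hg'

theorem Emap_coeff_ne (m : Fin n → ℤ) (X : HahnSeries G κ) (g : G)
    (h : (Emap F Φ m X).coeff g ≠ 0) : F.coord g = m ᵥ* F.smat Φ := by
  rw [Emap_coeff] at h
  by_cases hco : F.coord g = m ᵥ* F.smat Φ
  · exact hco
  · rw [if_neg hco] at h
    exact absurd rfl h

/-- The `Y`-coordinates of an exponent `g`. -/
noncomputable def mu (g : G) : Fin n → ℤ := F.coord g ᵥ* (F.smat Φ)⁻¹

theorem mu_vecMul (hunit : IsUnit (F.smat Φ).det) (g : G) :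
    mu F Φ g ᵥ* F.smat Φ = F.coord g := by
  rw [mu, Matrix.vecMul_vecMul, Matrix.nonsing_inv_mul _ hunit, Matrix.vecMul_one]

theorem mu_eq (hunit : IsUnit (F.smat Φ).det) {m : Fin n → ℤ} {g : G}
    (h : F.coord g = m ᵥ* F.smat Φ) : mu F Φ g = m := by
  rw [mu, h, Matrix.vecMul_vecMul, Matrix.mul_nonsing_inv _ hunit, Matrix.vecMul_one]

theorem rep_exists (hΦ : ∀ i, Φ i ≠ 0) (hunit : IsUnit (F.smat Φ).det) (Ψ : HahnSeries G κ) :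
    ∃ φ : (Fin n → ℤ) → HahnSeries G κ, IsRep F Φ Ψ φ := by
  classical
  have hSpwo : (Smon Φ).IsPWO := Smon_isPWO hΦ
  have hSpos : (Smon Φ \ {0}).IsPWO := Smon_sdiff_isPWO hΦ
  set D : Set G := Ψ.support + Smon Φ with hDdef
  have hDpwo : D.IsPWO := Ψ.isPWO_support.add hSpwo
  have hDadd : ∀ {p q : G}, p ∈ D → q ∈ Smon Φ → p + q ∈ D := by
    intro p q hp hq
    rw [hDdef, Set.mem_add] at hp ⊢
    obtain ⟨p', hp', q', hq', rfl⟩ := hp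
    exact ⟨p', hp', q' + q, Smon_add_mem hq' hq, (add_assoc _ _ _).symm⟩
  have hΨD : Ψ.support ⊆ D := by
    intro p hp
    rw [hDdef, Set.mem_add]
    exact ⟨p, hp, 0, Smon_zero_mem, add_zero p⟩
  have hwf : WellFounded (fun g' g : G => g' < g ∧ g' ∈ D ∧ g ∈ D) :=
    Set.wellFoundedOn_iff.mp hDpwo.isWF
  set body : (g : G) → ((g' : G) → (g' < g ∧ g' ∈ D ∧ g ∈ D) → κ) → κ := fun g ih =>
    if hg : g ∈ D then
      Ψ.coeff g - ∑ x ∈ Finset.antidiagonal hDpwo hSpos g,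
        (if hx : x.1 ∈ D ∧ x.1 < g then ih x.1 ⟨hx.2, hx.1, hg⟩ else 0) *
          ((Vmon Φ (mu F Φ x.1) - 1).coeff x.2)
    else 0
    with hbody
  set c : G → κ := hwf.fix body with hcdef
  have hc_eq : ∀ g, c g = body g fun g' _ => c g' := by
    intro g
    rw [hcdef]
    exact WellFounded.fix_eq hwf body g
  have hc0 : ∀ g, g ∉ D → c g = 0 := by
    intro g hg
    rw [hc_eq, hbody]
    exact dif_neg hg
  have hc : ∀ g ∈ D, c g = Ψ.coeff g - ∑ x ∈ Finset.antidiagonal hDpwo hSpos g,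
      c x.1 * ((Vmon Φ (mu F Φ x.1) - 1).coeff x.2) := by
    intro g hg
    rw [hc_eq, hbody]
    simp only
    rw [dif_pos hg]
    congr 1
    refine Finset.sum_congr rfl fun x hx => ?_
    rw [Finset.mem_antidiagonal] at hx
    have hlt : x.1 < g := by
      have hq := Smon_sdiff_pos hΦ x.2 hx.2.1
      calc x.1 < x.1 + x.2 := lt_add_of_pos_right _ hq
        _ = g := hx.2.2
    rw [dif_pos ⟨hx.1, hlt⟩]
  have hcsupp : (Function.support c).IsPWO := by
    refine hDpwo.mono fun g hg => ?_
    by_contra hgd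
    exact hg (hc0 g hgd)
  set Θ : HahnSeries G κ := ⟨c, hcsupp⟩ with hΘdef
  have hΘcoeff : ∀ g, Θ.coeff g = c g := fun g => rfl
  have hΘsupp : Θ.support ⊆ D := by
    intro g hg
    by_contra hgd
    exact HahnSeries.mem_support'.mp hg (hc0 g hgd)
  have hmain : ∀ g, Ψ.coeff g = c g + ∑ x ∈ Finset.antidiagonal hDpwo hSpos g,
      c x.1 * ((Vmon Φ (mu F Φ x.1) - 1).coeff x.2) := by
    intro g
    by_cases hg : g ∈ D
    · rw [hc g hg]; ring
    · have h1 : c g = 0 := hc0 g hg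
      have h2 : Ψ.coeff g = 0 := by
        by_contra h
        exact hg (hΨD h)
      rw [h1, h2, zero_add]
      refine (Finset.sum_eq_zero fun x hx => ?_).symm
      rw [Finset.mem_antidiagonal] at hx
      exact absurd (hx.2.2 ▸ hDadd hx.1 hx.2.1.1) hg
  set am : (Fin n → ℤ) → κ := fun m => ∏ i, (Φ i).leadingCoeff ^ m i with ham
  have hamne : ∀ m, am m ≠ 0 := fun m => Finset.prod_ne_zero_iff.mpr fun i _ =>
    zpow_ne_zero _ (leadingCoeff_ne_zero.mpr (hΦ i))
  set φ : (Fin n → ℤ) → HahnSeries G κ := fun m =>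
    (am m)⁻¹ • (HahnSeries.single (-(∑ i, m i • (Φ i).order)) (1 : κ) * Emap F Φ m Θ) with hφdef
  have hprod : ∀ m : Fin n → ℤ, (∏ i, Φ i ^ m i)
      = HahnSeries.single (∑ i, m i • (Φ i).order) (am m) * Vmon Φ m := by
    intro m
    have h1 : ∀ i : Fin n, Φ i ^ m i
        = HahnSeries.single (m i • (Φ i).order) ((Φ i).leadingCoeff ^ m i) * Wfac Φ i ^ m i := by
      intro i
      calc Φ i ^ m i
          = (HahnSeries.single ((Φ i).order) ((Φ i).leadingCoeff) * Wfac Φ i) ^ m i := by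
            rw [← Phi_factor hΦ i]
        _ = (HahnSeries.single ((Φ i).order) ((Φ i).leadingCoeff)) ^ m i * Wfac Φ i ^ m i :=
            mul_zpow _ _ _
        _ = HahnSeries.single (m i • (Φ i).order) ((Φ i).leadingCoeff ^ m i)
            * Wfac Φ i ^ m i := by
            rw [single_zpow' _ _ (leadingCoeff_ne_zero.mpr (hΦ i)) (m i)]
    rw [Finset.prod_congr rfl fun i _ => h1 i, Finset.prod_mul_distrib, prod_single', Vmon, ham]
  have hφP : ∀ m, φ m * ∏ i, Φ i ^ m i = Emap F Φ m Θ * Vmon Φ m := by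
    intro m
    rw [hprod m, hφdef]
    simp only
    rw [smul_mul_assoc, mul_mul_mul_comm, single_mul_single, neg_add_cancel, one_mul,
      single_zero_mul_eq_smul, smul_smul, inv_mul_cancel₀ (hamne m), one_smul]
  have hEV : ∀ m, Emap F Φ m Θ * Vmon Φ m
      = Emap F Φ m Θ + Emap F Φ m Θ * (Vmon Φ m - 1) := fun m => by ring
  have hEne : ∀ m g, (Emap F Φ m Θ).coeff g ≠ 0 → m = mu F Φ g := fun m g h =>
    (mu_eq F Φ hunit (Emap_coeff_ne F Φ m Θ g h)).symm
  have hEmu : ∀ g, (Emap F Φ (mu F Φ g) Θ).coeff g = c g := by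
    intro g
    rw [Emap_coeff, if_pos (mu_vecMul F Φ hunit g).symm]
  have hmulco : ∀ m g, (Emap F Φ m Θ * (Vmon Φ m - 1)).coeff g
      = ∑ x ∈ Finset.antidiagonal hDpwo hSpos g,
          (Emap F Φ m Θ).coeff x.1 * (Vmon Φ m - 1).coeff x.2 :=
    fun m g => mul_coeff_superset _ _ hDpwo hSpos
      (fun p hp => hΘsupp (Emap_support F Φ m Θ hp)) (eps_support hΦ m) g
  set T : G → Finset (Fin n → ℤ) :=
    fun g => (Finset.antidiagonal hDpwo hSpos g).image fun x => mu F Φ x.1 with hT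
  have hsupp2 : ∀ g, (Function.support fun m => (Emap F Φ m Θ * (Vmon Φ m - 1)).coeff g)
      ⊆ ↑(T g) := by
    intro g m hm
    rw [Function.mem_support, hmulco] at hm
    obtain ⟨x, hx, hne⟩ := Finset.exists_ne_zero_of_sum_ne_zero hm
    have hmx : m = mu F Φ x.1 := hEne m x.1 (left_ne_zero_of_mul hne)
    rw [hT]
    exact Finset.mem_coe.mpr (Finset.mem_image.mpr ⟨x, hx, hmx.symm⟩)
  have hkey : ∀ m, φ m * HahnSeries.single (∑ i, m i • (Φ i).order) (1 : κ)
      = (am m)⁻¹ • Emap F Φ m Θ := by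
    intro m
    rw [hφdef]
    simp only
    rw [smul_mul_assoc, mul_right_comm, single_mul_single, neg_add_cancel, one_mul,
      single_zero_one, one_mul]
  refine ⟨φ, ?_, ?_, ?_, ?_, ?_⟩
  · -- condition 1: coefficients supported in H
    intro m g hg
    rw [hφdef] at hg
    simp only [coeff_smul, smul_eq_mul] at hg
    have h2 := right_ne_zero_of_mul hg
    rw [single_mul_coeff', one_mul, sub_neg_eq_add] at h2
    have hco := Emap_coeff_ne F Φ m Θ _ h2
    rw [F.coord_add', F.coord_lin] at hco
    have h4 : F.coord g = 0 := by
      have h5 := hco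
      exact add_eq_right.mp h5
    exact F.mem_of_coord_eq_zero h4
  · -- condition 2
    intro g
    refine Set.Finite.subset (Set.finite_singleton (mu F Φ g)) ?_
    intro m hm
    rw [Set.mem_setOf_eq, hkey m] at hm
    simp only [coeff_smul, smul_eq_mul] at hm
    exact Set.mem_singleton_iff.mpr (hEne m g (right_ne_zero_of_mul hm))
  · -- condition 3
    refine ⟨⟨fun g => (am (mu F Φ g))⁻¹ * c g, ?_⟩, ?_⟩
    · refine hcsupp.mono fun g hg => ?_
      rw [Function.mem_support] at hg ⊢
      exact right_ne_zero_of_mul hg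
    · intro g
      rw [finsum_eq_single _ (mu F Φ g) ?_]
      · rw [hkey]
        simp only [coeff_smul, smul_eq_mul]
        rw [hEmu g]
      · intro m hm
        rw [hkey m]
        simp only [coeff_smul, smul_eq_mul]
        by_cases h0 : (Emap F Φ m Θ).coeff g = 0
        · rw [h0, mul_zero]
        · exact absurd (hEne m g h0) hm
  · -- condition 4
    intro g
    refine Set.Finite.subset
      (Set.Finite.union (Set.finite_singleton (mu F Φ g)) (T g).finite_toSet) ?_
    intro m hm
    rw [Set.mem_setOf_eq, hφP m, hEV m, coeff_add] at hm
    by_cases h1 : (Emap F Φ m Θ).coeff g = 0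
    · rw [h1, zero_add] at hm
      exact Set.mem_union_right _ (hsupp2 g hm)
    · exact Set.mem_union_left _ (Set.mem_singleton_iff.mpr (hEne m g h1))
  · -- condition 5
    intro g
    have hsupp1 : (Function.support fun m => (Emap F Φ m Θ).coeff g) ⊆ {mu F Φ g} :=
      fun m hm => Set.mem_singleton_iff.mpr (hEne m g hm)
    have step1 : ∑ᶠ m : Fin n → ℤ, (φ m * ∏ i, Φ i ^ m i).coeff g
        = ∑ᶠ m : Fin n → ℤ, ((Emap F Φ m Θ).coeff g
            + (Emap F Φ m Θ * (Vmon Φ m - 1)).coeff g) :=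
      finsum_congr fun m => by rw [hφP, hEV, coeff_add]
    have step2 : ∑ᶠ m : Fin n → ℤ, ((Emap F Φ m Θ).coeff g
            + (Emap F Φ m Θ * (Vmon Φ m - 1)).coeff g)
        = (∑ᶠ m : Fin n → ℤ, (Emap F Φ m Θ).coeff g)
            + ∑ᶠ m : Fin n → ℤ, (Emap F Φ m Θ * (Vmon Φ m - 1)).coeff g :=
      finsum_add_distrib ((Set.finite_singleton _).subset hsupp1)
        ((T g).finite_toSet.subset (hsupp2 g))
    have step3 : ∑ᶠ m : Fin n → ℤ, (Emap F Φ m Θ).coeff g = c g := by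
      rw [finsum_eq_single _ (mu F Φ g) ?_]
      · exact hEmu g
      · intro m hm
        by_cases h0 : (Emap F Φ m Θ).coeff g = 0
        · exact h0
        · exact absurd (hEne m g h0) hm
    have step4 : ∑ᶠ m : Fin n → ℤ, (Emap F Φ m Θ * (Vmon Φ m - 1)).coeff g
        = ∑ x ∈ Finset.antidiagonal hDpwo hSpos g,
            c x.1 * ((Vmon Φ (mu F Φ x.1) - 1).coeff x.2) := by
      rw [finsum_eq_finset_sum_of_support_subset _ (hsupp2 g)]
      rw [Finset.sum_congr rfl fun m _ => hmulco m g, Finset.sum_comm]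
      refine Finset.sum_congr rfl fun x hx => ?_
      rw [Finset.sum_eq_single_of_mem (mu F Φ x.1)
        (Finset.mem_image.mpr ⟨x, hx, rfl⟩) ?_]
      · rw [hEmu x.1]
      · intro b _ hb
        by_cases h0 : (Emap F Φ b Θ).coeff x.1 = 0
        · rw [h0, zero_mul]
        · exact absurd (hEne b x.1 h0) hb
    rw [step1, step2, step3, step4]
    exact hmain g

end Existence

open HahnSeries Matrix in
/-- Characterization of regularity: a system of parameters `Φ₁,…,Φₙ` of `κ[[e^G]]`
over `κ[[e^H]]` (nonzero series whose multiplicity matrix `s`, with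
`s i j = F.coord ((Φ i).order) j`, has `det s ≠ 0` in `κ`) is regular — i.e. every
`Ψ ∈ κ[[e^G]]` has a unique representation `Ψ = Σ φ_{i₁…iₙ} Φ₁^{i₁}⋯Φₙ^{iₙ}` with
`φ_{i₁…iₙ} ∈ κ[[e^H]]` such that `Σ φ_{i₁…iₙ} Y₁^{i₁}⋯Yₙ^{iₙ} ∈ κ[[e^G]]`, where
`Yᵢ = e^{order Φᵢ}` comes from the factorization `Φᵢ = aᵢYᵢ(1+Φ̃ᵢ)` — if and only if
`det s` is invertible in `ℤ`. -/
theorem regularity_characterization (F : FreeData G n)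
    (Φ : Fin n → HahnSeries G κ) (hΦ : ∀ i, Φ i ≠ 0)
    (hpar : (((Matrix.of fun i j => F.coord ((Φ i).order) j).det : ℤ) : κ) ≠ 0) :
    (∀ Ψ : HahnSeries G κ,
      ∃! φ : (Fin n → ℤ) → HahnSeries G κ,
        -- the coefficients lie in `κ[[e^H]]`
        (∀ m, ∀ g : G, (φ m).coeff g ≠ 0 → g ∈ F.H) ∧
        -- `Σ φ_{i₁…iₙ} Y₁^{i₁}⋯Yₙ^{iₙ}` is a generalized power series
        (∀ g : G, {m : Fin n → ℤ |
          (φ m * HahnSeries.single (∑ i, m i • (Φ i).order) (1 : κ)).coeff g ≠ 0}.Finite) ∧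
        (∃ Θ : HahnSeries G κ, ∀ g : G, Θ.coeff g =
          ∑ᶠ m : Fin n → ℤ,
            (φ m * HahnSeries.single (∑ i, m i • (Φ i).order) (1 : κ)).coeff g) ∧
        -- `Ψ = Σ φ_{i₁…iₙ} Φ₁^{i₁}⋯Φₙ^{iₙ}`
        (∀ g : G, {m : Fin n → ℤ | (φ m * ∏ i, Φ i ^ m i).coeff g ≠ 0}.Finite) ∧
        (∀ g : G, Ψ.coeff g = ∑ᶠ m : Fin n → ℤ, (φ m * ∏ i, Φ i ^ m i).coeff g)) ↔
    IsUnit (Matrix.of fun i j => F.coord ((Φ i).order) j).det := by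
  have hdet : (F.smat Φ).det ≠ 0 := by
    intro h0
    apply hpar
    rw [show (Matrix.of fun i j => F.coord ((Φ i).order) j) = F.smat Φ from rfl, h0]
    simp
  constructor
  · intro hreg
    have hrow : ∀ j : Fin n, ∃ m : Fin n → ℤ, m ᵥ* F.smat Φ = Pi.single j 1 := by
      intro j
      obtain ⟨φ, hφ, -⟩ := hreg (HahnSeries.single (F.u j) 1)
      obtain ⟨h1, h2, h3, h4, h5⟩ := hφ
      have hne : ∃ m, φ m ≠ 0 := by
        by_contra hc
        push_neg at hc
        have hj := h5 (F.u j)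
        rw [coeff_single_same] at hj
        have h0 : ∑ᶠ m : Fin n → ℤ, ((φ m * ∏ i, Φ i ^ m i).coeff (F.u j)) = 0 := by
          rw [finsum_eq_zero_of_forall_eq_zero]
          intro m
          rw [hc m, zero_mul, coeff_zero]
        rw [h0] at hj
        exact one_ne_zero hj
      obtain ⟨g₀, m₁, hm₁, hco, hfin⟩ := core_nonvanishing F Φ hΦ hdet φ h1 h3 hne
      have hg₀ : g₀ = F.u j := by
        by_contra hgg
        have hj := h5 g₀
        rw [coeff_single, if_neg hgg] at hj
        exact hfin hj.symm
      exact ⟨m₁, by rw [← hco, hg₀, F.coord_u]⟩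
    choose t ht using hrow
    have hts : (Matrix.of t) * F.smat Φ = 1 := by
      ext j k
      rw [Matrix.mul_apply]
      have hjk := congrFun (ht j) k
      simp only [Matrix.vecMul, dotProduct] at hjk
      rw [show ∑ i, Matrix.of t j i * F.smat Φ i k = ∑ i, t j i * F.smat Φ i k from rfl, hjk]
      simp [Matrix.one_apply, Pi.single_apply, eq_comm]
    have hdet1 : (Matrix.of t).det * (F.smat Φ).det = 1 := by
      rw [← Matrix.det_mul, hts, Matrix.det_one]
    exact IsUnit.of_mul_eq_one _ (by rw [mul_comm] at hdet1; exact hdet1)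
  · intro hunit
    intro Ψ
    obtain ⟨φ, hφ⟩ := rep_exists F Φ hΦ hunit Ψ
    exact ⟨φ, hφ, fun φ' hφ' => rep_unique F Φ hΦ hdet Ψ φ' φ hφ' hφ⟩
end GoodSets
end
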